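/- For all nonnegative integers n and d, Σ_{s=0}^{2n−2} f(d,s) = Σ_{μ ∈ Λ_{d,n}} μ₂. -/

import Mathlib

/-!
Summed over `s`, `f(d, s)` counts the pairs `(ν, ν')` of equal size `k ≤ d` with `ℓ_{ν'} < ℓ_ν`
(as `ℓ ≤ n`, every such pair has `s ≤ 2n - 2`). On `ℙ*_{k,n}`, a set of `m + 1` elements with
`m = min(⌊k/2⌋, n)`, the map `ℓ` is injective: `ν₁ - ν₂ ≤ 2n + 1` runs through numbers of one
parity, and `t` and `2n + 1 - t` have opposite parities. So these pairs number `C(m + 1, 2)`,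
which is `0 + 1 + ⋯ + m = Σ_{μ ∈ ℙ_{k,n}} μ₂`.
-/

open Finset Polynomial

namespace Capelli

/-- The set `ℙ_{k,n}` of pairs `μ = (μ₁, μ₂)` of nonnegative integers with `μ₁ ≥ μ₂`,
`μ₁ + μ₂ = k` and `μ₂ ≤ n`. -/
def Pkn (n k : ℕ) : Finset (ℕ × ℕ) :=
  (Finset.range (k + 1) ×ˢ Finset.range (k + 1)).filter
    (fun μ => μ.2 ≤ μ.1 ∧ μ.1 + μ.2 = k ∧ μ.2 ≤ n)

/-- The set `ℙ*_{k,n}` of pairs `ν = (ν₁, ν₂)` of nonnegative integers with `ν₁ ≥ ν₂`,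
`ν₁ + ν₂ = k` and `ν₂ ≥ ⌊k/2⌋ - n` (written here additively to avoid truncated subtraction). -/
def PknStar (n k : ℕ) : Finset (ℕ × ℕ) :=
  (Finset.range (k + 1) ×ˢ Finset.range (k + 1)).filter
    (fun ν => ν.2 ≤ ν.1 ∧ ν.1 + ν.2 = k ∧ k / 2 ≤ ν.2 + n)

/-- `Λ_{d,n} = ⋃_{k=0}^d ℙ_{k,n}`. -/
def Lam (n d : ℕ) : Finset (ℕ × ℕ) := (Finset.range (d + 1)).biUnion (Pkn n)

/-- `Λ*_{d,n} = ⋃_{k=0}^d ℙ*_{k,n}`. -/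
def LamStar (n d : ℕ) : Finset (ℕ × ℕ) := (Finset.range (d + 1)).biUnion (PknStar n)

/-- `ℓ_ν = min(ν₁ - ν₂, 2n + 1 - (ν₁ - ν₂))`. -/
def ell (n : ℕ) (ν : ℕ × ℕ) : ℕ := min (ν.1 - ν.2) (2 * n + 1 - (ν.1 - ν.2))

/-- `Λ_{d,n,j} = {μ ∈ Λ_{d,n} : μ₂ ≥ j}`. -/
def Lamj (n d j : ℕ) : Finset (ℕ × ℕ) := (Lam n d).filter (fun μ => j ≤ μ.2)

/-- `Λ*_{d,n,j} = {ν ∈ Λ*_{d,n} : ν₂ ≤ ⌊|ν|/2⌋ - j}`. -/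
def LamStarj (n d j : ℕ) : Finset (ℕ × ℕ) :=
  (LamStar n d).filter (fun ν => ν.2 + j ≤ (ν.1 + ν.2) / 2)

/-- `ν_{(j)} = (|ν| - ⌊|ν|/2⌋ + j, ⌊|ν|/2⌋ - j)`. -/
def nuSub (ν : ℕ × ℕ) (j : ℕ) : ℕ × ℕ :=
  (ν.1 + ν.2 - (ν.1 + ν.2) / 2 + j, (ν.1 + ν.2) / 2 - j)

/-- The polynomial `λ_{μ,ν}(x) = ((2x+1)ℓ_ν - ℓ_ν²)^{μ₂} (ν₁+ν₂)^{μ₁-μ₂} ∈ ℤ[x]`. -/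
noncomputable def lamPoly (n : ℕ) (μ ν : ℕ × ℕ) : Polynomial ℤ :=
  ((2 * X + 1) * C (ell n ν : ℤ) - C ((ell n ν : ℤ) ^ 2)) ^ μ.2 *
    C ((ν.1 + ν.2 : ℕ) : ℤ) ^ (μ.1 - μ.2)

/-- The row ordering: `μ ⪯ μ'` iff `μ₂ < μ₂'`, or `μ₂ = μ₂'` and `μ₁ ≤ μ₁'`. -/
def rowRel (μ μ' : ℕ × ℕ) : Prop := μ.2 < μ'.2 ∨ (μ.2 = μ'.2 ∧ μ.1 ≤ μ'.1)

/-- The column ordering: `ν ⩽ ν'` iff `⌊(ν₁-ν₂)/2⌋ < ⌊(ν₁'-ν₂')/2⌋`, or these are equal and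
`|ν| ≤ |ν'|`.  (A further tie-break by the first coordinate is added so that the relation is
antisymmetric on all of `ℕ × ℕ`; on `Λ*_{d,n}` a tie in the first two comparisons forces
equality, so this agrees with the ordering of the paper there.) -/
def colRel (ν ν' : ℕ × ℕ) : Prop :=
  (ν.1 - ν.2) / 2 < (ν'.1 - ν'.2) / 2 ∨
    ((ν.1 - ν.2) / 2 = (ν'.1 - ν'.2) / 2 ∧
      (ν.1 + ν.2 < ν'.1 + ν'.2 ∨ (ν.1 + ν.2 = ν'.1 + ν'.2 ∧ ν.1 ≤ ν'.1)))

instance : DecidableRel rowRel := fun a b =>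
  inferInstanceAs (Decidable (a.2 < b.2 ∨ (a.2 = b.2 ∧ a.1 ≤ b.1)))

instance : IsTrans (ℕ × ℕ) rowRel := ⟨by intro a b c; unfold rowRel; omega⟩

instance : IsTotal (ℕ × ℕ) rowRel := ⟨by intro a b; unfold rowRel; omega⟩

instance : IsAntisymm (ℕ × ℕ) rowRel :=
  ⟨by intro a b h1 h2; unfold rowRel at h1 h2; rw [Prod.ext_iff]; omega⟩

instance : DecidableRel colRel := fun a b =>
  inferInstanceAs (Decidable ((a.1 - a.2) / 2 < (b.1 - b.2) / 2 ∨
    ((a.1 - a.2) / 2 = (b.1 - b.2) / 2 ∧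
      (a.1 + a.2 < b.1 + b.2 ∨ (a.1 + a.2 = b.1 + b.2 ∧ a.1 ≤ b.1)))))

instance : IsTrans (ℕ × ℕ) colRel := ⟨by intro a b c; unfold colRel; omega⟩

instance : IsTotal (ℕ × ℕ) colRel := ⟨by intro a b; unfold colRel; omega⟩

instance : IsAntisymm (ℕ × ℕ) colRel :=
  ⟨by intro a b h1 h2; unfold colRel at h1 h2; rw [Prod.ext_iff]; omega⟩

/-- The elements of `Λ_{d,n}` listed in increasing order for `⪯`. -/
def rowList (n d : ℕ) : List (ℕ × ℕ) := (Lam n d).sort rowRel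

/-- The elements of `Λ*_{d,n}` listed in increasing order for `⩽`. -/
def colList (n d : ℕ) : List (ℕ × ℕ) := (LamStar n d).sort colRel

/-- The elements of `Λ_{d,n,j}` listed in increasing order for `⪯`. -/
def rowListJ (n d j : ℕ) : List (ℕ × ℕ) := (Lamj n d j).sort rowRel

/-- The elements of `Λ*_{d,n,j}` listed in increasing order for `⩽`. -/
def colListJ (n d j : ℕ) : List (ℕ × ℕ) := (LamStarj n d j).sort colRel

/-- The matrix `M_d = [λ_{μ,ν}]` with rows indexed by `Λ_{d,n}` (ordered by `⪯`) and columns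
indexed by `Λ*_{d,n}` (ordered by `⩽`); since `|Λ_{d,n}| = |Λ*_{d,n}|` the column list has
length `(Lam n d).card` and the `getD` access below always hits an actual entry. -/
noncomputable def Md (n d : ℕ) : Matrix (Fin (Lam n d).card) (Fin (Lam n d).card) (Polynomial ℤ) :=
  fun i j => lamPoly n ((rowList n d).getD i.val (0, 0)) ((colList n d).getD j.val (0, 0))

/-- The matrix `M_d' = [(2ℓ_ν)^{μ₂}(ν₁+ν₂)^{μ₁-μ₂}]` of leading coefficients. -/
def Md' (n d : ℕ) : Matrix (Fin (Lam n d).card) (Fin (Lam n d).card) ℤ :=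
  fun i j =>
    let μ := (rowList n d).getD i.val (0, 0)
    let ν := (colList n d).getD j.val (0, 0)
    (2 * (ell n ν : ℤ)) ^ μ.2 * ((ν.1 + ν.2 : ℕ) : ℤ) ^ (μ.1 - μ.2)

/-- `S_{μ,ν,j}` with `m = μ₂ - j`: the complete homogeneous symmetric polynomial of degree `m`
evaluated at `ℓ_{ν_{(0)}}, …, ℓ_{ν_{(j-1)}}, ℓ_ν`, i.e. the sum over all `(j+1)`-tuples
`(a₀, …, a_j)` of nonnegative integers with `a₀ + ⋯ + a_j = m` of
`ℓ_{ν_{(0)}}^{a₀} ⋯ ℓ_{ν_{(j-1)}}^{a_{j-1}} ℓ_ν^{a_j}`. -/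
def Shs (n : ℕ) (ν : ℕ × ℕ) (j m : ℕ) : ℕ :=
  ∑ a ∈ Finset.Nat.antidiagonalTuple (j + 1) m,
    ∏ i : Fin (j + 1), (if (i : ℕ) < j then ell n (nuSub ν (i : ℕ)) else ell n ν) ^ a i

/-- The matrix `N_j = [2^{μ₂-j}(ν₁+ν₂)^{μ₁-μ₂} S_{μ,ν,j}]` with rows indexed by `Λ_{d,n,j}`
(ordered by `⪯`) and columns indexed by `Λ*_{d,n,j}` (ordered by `⩽`). -/
def Ndj (n d j : ℕ) : Matrix (Fin (Lamj n d j).card) (Fin (Lamj n d j).card) ℤ :=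
  fun i i' =>
    let μ := (rowListJ n d j).getD i.val (0, 0)
    let ν := (colListJ n d j).getD i'.val (0, 0)
    2 ^ (μ.2 - j) * ((ν.1 + ν.2 : ℕ) : ℤ) ^ (μ.1 - μ.2) * (Shs n ν j (μ.2 - j) : ℤ)

/-- The Vandermonde matrix `V(a, a+1, …, a+s-1) = [(a+j)^{i-1}]_{1 ≤ i,j ≤ s}` (0-indexed
as `[(a+j)^i]_{0 ≤ i,j ≤ s-1}`), with the convention `0⁰ = 1`. -/
def vandInt (a s : ℕ) : Matrix (Fin s) (Fin s) ℤ :=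
  fun i j => ((a + (j : ℕ) : ℕ) : ℤ) ^ (i : ℕ)

/-- `f(d,s) = #{(ν,ν') ∈ Λ*_{d,n} × Λ*_{d,n} : |ν| = |ν'|, ℓ_{ν'} < ℓ_ν, ℓ_ν + ℓ_{ν'} - 1 = s}`. -/
def fds (n d : ℕ) (s : ℤ) : ℕ :=
  (((LamStar n d) ×ˢ (LamStar n d)).filter
    (fun p => p.1.1 + p.1.2 = p.2.1 + p.2.2 ∧ ell n p.2 < ell n p.1 ∧
      (ell n p.1 : ℤ) + (ell n p.2 : ℤ) - 1 = s)).card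

/-- `g_k(s) = #{(ν,ν') ∈ ℙ*_{k,n} × ℙ*_{k,n} : ℓ_{ν'} < ℓ_ν, ℓ_ν + ℓ_{ν'} - 1 = s}`. -/
def gks (n k : ℕ) (s : ℤ) : ℕ :=
  ((PknStar n k ×ˢ PknStar n k).filter
    (fun p => ell n p.2 < ell n p.1 ∧ (ell n p.1 : ℤ) + (ell n p.2 : ℤ) - 1 = s)).card

theorem card_filter_lt_of_injOn {α β : Type*} [LinearOrder β] {s : Finset α} {f : α → β}
    (hf : Set.InjOn f s) : #{p ∈ s ×ˢ s | f p.2 < f p.1} = (#s).choose 2 := by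
  rw [← card_image_of_injOn hf, ← card_product_filter_lt]
  refine card_bij (fun p _ => (f p.2, f p.1)) ?_ ?_ ?_
  · intro p hp
    simp only [mem_filter, mem_product, mem_image] at hp ⊢
    exact ⟨⟨⟨_, hp.1.2, rfl⟩, ⟨_, hp.1.1, rfl⟩⟩, hp.2⟩
  · intro p hp q hq hpq
    simp only [mem_filter, mem_product] at hp hq
    simp only [Prod.mk.injEq] at hpq
    exact Prod.ext (hf hp.1.1 hq.1.1 hpq.2) (hf hp.1.2 hq.1.2 hpq.1)
  · rintro ⟨x₁, x₂⟩ hx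
    simp only [mem_filter, mem_product, mem_image] at hx
    obtain ⟨⟨⟨b, hb, rfl⟩, ⟨a, ha, rfl⟩⟩, hlt⟩ := hx
    exact ⟨(a, b), by simp [ha, hb, hlt], rfl⟩

lemma mem_Pkn_iff {n k : ℕ} {μ : ℕ × ℕ} :
    μ ∈ Pkn n k ↔ μ.2 ≤ μ.1 ∧ μ.1 + μ.2 = k ∧ μ.2 ≤ n := by
  simp only [Pkn, mem_filter, mem_product, mem_range]
  omega

lemma mem_PknStar_iff {n k : ℕ} {ν : ℕ × ℕ} :
    ν ∈ PknStar n k ↔ ν.2 ≤ ν.1 ∧ ν.1 + ν.2 = k ∧ k / 2 ≤ ν.2 + n := by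
  simp only [PknStar, mem_filter, mem_product, mem_range]
  omega

lemma mem_LamStar_iff {n d : ℕ} {ν : ℕ × ℕ} :
    ν ∈ LamStar n d ↔ ν.1 + ν.2 ≤ d ∧ ν ∈ PknStar n (ν.1 + ν.2) := by
  simp only [LamStar, mem_biUnion, mem_range, mem_PknStar_iff, true_and]
  grind

lemma ell_le (n : ℕ) (ν : ℕ × ℕ) : ell n ν ≤ n := by
  unfold ell; omega

lemma card_PknStar (n k : ℕ) : #(PknStar n k) = min (k / 2) n + 1 := by
  rw [← card_range (min (k / 2) n + 1)]
  refine card_nbij' (fun ν => k / 2 - ν.2) (fun j => (k - (k / 2 - j), k / 2 - j))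
    ?_ ?_ ?_ ?_ <;> intro x hx <;>
    simp only [coe_range, Set.mem_Iio, mem_coe, mem_PknStar_iff, Prod.ext_iff] at hx ⊢ <;> omega

lemma injOn_ell_PknStar (n k : ℕ) : Set.InjOn (ell n) (PknStar n k) := by
  intro ν hν ν' hν' he
  simp only [mem_coe, mem_PknStar_iff] at hν hν'
  unfold ell at he
  ext <;> omega

lemma card_filter_ell_lt_PknStar (n k : ℕ) :
    #{p ∈ PknStar n k ×ˢ PknStar n k | ell n p.2 < ell n p.1} = (min (k / 2) n + 1).choose 2 := by
  rw [card_filter_lt_of_injOn (injOn_ell_PknStar n k), card_PknStar]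

lemma sum_snd_Pkn (n k : ℕ) : ∑ μ ∈ Pkn n k, μ.2 = (min (k / 2) n + 1).choose 2 := by
  rw [Nat.choose_two_right, ← sum_range_id]
  refine sum_nbij' Prod.snd (fun j => (k - j, j)) ?_ ?_ ?_ ?_ (fun _ _ => rfl) <;> intro x hx <;>
    simp only [mem_range, mem_Pkn_iff, Prod.ext_iff, and_true] at hx ⊢ <;> omega

def orderedPairs (n d : ℕ) : Finset ((ℕ × ℕ) × (ℕ × ℕ)) :=
  {p ∈ LamStar n d ×ˢ LamStar n d | p.1.1 + p.1.2 = p.2.1 + p.2.2 ∧ ell n p.2 < ell n p.1}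

lemma sum_fds_eq_card_orderedPairs (n d : ℕ) :
    ∑ s ∈ range (2 * n - 1), fds n d s = #(orderedPairs n d) := by
  have hs : ∀ p ∈ orderedPairs n d, ell n p.1 + ell n p.2 - 1 ∈ range (2 * n - 1) := by
    intro p hp
    have := ell_le n p.1
    simp only [orderedPairs, mem_filter, mem_range] at hp ⊢
    omega
  rw [card_eq_sum_card_fiberwise hs]
  refine sum_congr rfl fun s _ => congrArg card ?_
  ext p
  simp only [orderedPairs, mem_filter, and_assoc]
  exact and_congr_right fun _ => by omega

lemma card_orderedPairs_eq_sum (n d : ℕ) : #(orderedPairs n d) =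
    ∑ k ∈ range (d + 1), #{p ∈ PknStar n k ×ˢ PknStar n k | ell n p.2 < ell n p.1} := by
  have hk : ∀ p ∈ orderedPairs n d, p.1.1 + p.1.2 ∈ range (d + 1) := by
    intro p hp
    simp only [orderedPairs, mem_filter, mem_product, mem_LamStar_iff, mem_range] at hp ⊢
    omega
  rw [card_eq_sum_card_fiberwise hk]
  refine sum_congr rfl fun k hk => congrArg card ?_
  ext p
  simp only [mem_range] at hk
  simp only [orderedPairs, mem_filter, mem_product, mem_LamStar_iff, mem_PknStar_iff, true_and]
  omega

lemma sum_snd_Lam (n d : ℕ) :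
    ∑ μ ∈ Lam n d, μ.2 = ∑ k ∈ range (d + 1), ∑ μ ∈ Pkn n k, μ.2 := by
  refine sum_biUnion fun a _ b _ hab => disjoint_left.mpr fun μ ha hb => hab ?_
  rw [mem_Pkn_iff] at ha hb
  omega

/-- For all nonnegative integers `n` and `d`,
`Σ_{s=0}^{2n-2} f(d,s) = Σ_{μ ∈ Λ_{d,n}} μ₂`. -/
theorem sum_fds (n d : ℕ) :
    ∑ s ∈ Finset.range (2 * n - 1), fds n d (s : ℤ) = ∑ μ ∈ Lam n d, μ.2 := by
  rw [sum_fds_eq_card_orderedPairs, card_orderedPairs_eq_sum, sum_snd_Lam]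
  exact sum_congr rfl fun k _ => (card_filter_ell_lt_PknStar n k).trans (sum_snd_Pkn n k).symm

end Capelli
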